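/- arXiv:1709.04398 — 5 statements merged into one kernel-verified Lean document; each statement's English description precedes it below -/
import Mathlib

section
/- In the setting of the weighted directed cycle with T = (I−G)^{-1} and Δ = 1 − g_1⋯g_η ≠ 0, for each j = 1,...,η−1 the ratio T_{η,j} / T_{η,j+1} equals g_j (the weight of edge (j, j+1)), provided T_{η,j+1} ≠ 0. Hence all edge weights of the cycle are determined by the row of T indexed by the single node η. -/
/-!
Since `T (I - G) = I` and `(T G)_{a,c} = T_{a,c+1} g_c`, every row of `T` satisfies
`T_{a,c} = δ_{a,c} + g_c T_{a,c+1}`; on the row `a = η` and off the diagonal this is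
`T_{η,j} = g_j T_{η,j+1}`. The inverse exists because `T_{η,j+1} ≠ 0`, as `A⁻¹ = 0` for a
singular `A`.
-/

namespace Matrix

theorem isUnit_det_of_nonsing_inv_apply_ne_zero {ι R : Type*} [Fintype ι] [DecidableEq ι]
    [CommRing R] {A : Matrix ι ι R} {i k : ι} (h : A⁻¹ i k ≠ 0) : IsUnit A.det := by
  by_contra hA
  exact h (by rw [nonsing_inv_apply_not_isUnit A hA, zero_apply])

theorem mul_cycleShift_apply {ι R : Type*} [NonUnitalNonAssocSemiring R] {n : ℕ}
    (g : Fin (n + 1) → R) (G : Matrix (Fin (n + 1)) (Fin (n + 1)) R)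
    (hG : ∀ a b, G a b = if a = b + 1 then g b else 0)
    (M : Matrix ι (Fin (n + 1)) R) (a : ι) (c : Fin (n + 1)) :
    (M * G) a c = M a (c + 1) * g c := by
  simp only [mul_apply, hG, mul_ite, mul_zero, Finset.sum_ite_eq', Finset.mem_univ, if_true]

theorem inv_one_sub_cycleShift_apply {R : Type*} [CommRing R] {n : ℕ}
    (g : Fin (n + 1) → R) (G : Matrix (Fin (n + 1)) (Fin (n + 1)) R)
    (hG : ∀ a b, G a b = if a = b + 1 then g b else 0)
    (hdet : IsUnit (1 - G).det) (a c : Fin (n + 1)) :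
    (1 - G)⁻¹ a c = (1 : Matrix (Fin (n + 1)) (Fin (n + 1)) R) a c
      + g c * (1 - G)⁻¹ a (c + 1) := by
  have hrow := congr_fun (congr_fun (nonsing_inv_mul (1 - G) hdet) a) c
  rw [mul_sub, mul_one, sub_apply, mul_cycleShift_apply g G hG] at hrow
  linear_combination hrow

end Matrix

open Matrix

theorem stmt9_general {n : ℕ} {F : Type*} [Field F]
    (g : Fin (n + 1) → F)
    (G : Matrix (Fin (n + 1)) (Fin (n + 1)) F)
    (hG : ∀ a b, G a b = if a = b + 1 then g b else 0)
    (j : Fin (n + 1)) (hj : j ≠ Fin.last n)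
    (hT : (1 - G)⁻¹ (Fin.last n) (j + 1) ≠ 0) :
    (1 - G)⁻¹ (Fin.last n) j / (1 - G)⁻¹ (Fin.last n) (j + 1) = g j := by
  have hrec := inv_one_sub_cycleShift_apply g G hG
    (isUnit_det_of_nonsing_inv_apply_ne_zero hT) (Fin.last n) j
  rw [one_apply_ne hj.symm, zero_add] at hrec
  rw [hrec, mul_div_assoc, div_self hT, mul_one]

/-- In the weighted directed cycle setting, the edge weights are recovered from
the last row of `T = (I-G)⁻¹`: for `j ≠ η`, `T_{η,j} / T_{η,j+1} = g_j`
whenever `T_{η,j+1} ≠ 0`. -/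
theorem stmt9 {n : ℕ} {F : Type*} [Field F]
    (g : Fin (n + 1) → F) (hg : ∀ a, g a ≠ 0)
    (G : Matrix (Fin (n + 1)) (Fin (n + 1)) F)
    (hG : ∀ a b, G a b = if a = b + 1 then g b else 0)
    (hΔ : (1 : F) - ∏ a, g a ≠ 0)
    (j : Fin (n + 1)) (hj : j ≠ Fin.last n)
    (hT : (1 - G)⁻¹ (Fin.last n) (j + 1) ≠ 0) :
    (1 - G)⁻¹ (Fin.last n) j / (1 - G)⁻¹ (Fin.last n) (j + 1) = g j :=
  stmt9_general g G hG j hj hT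
end

section
/- Let Γ be a finite acyclic directed graph in which between any two nodes there is at most one directed path, and suppose there is an edge (i,k) and a directed path from k to a node j such that i does not lie on this path. Let G be any weighted adjacency matrix consistent with Γ (G_{lm} ≠ 0 only if (m,l) is an edge) with I−G invertible; set T = (I−G)^{-1}. Then T_{ji} = T_{jk} · G_{ki}. In particular, if T_{jk} ≠ 0 then G_{ki} = T_{ji} / T_{jk}. -/
/-!
By Cayley–Hamilton, `T = (1 - G)⁻¹` is a polynomial in `G` of degree `< n`, so `T j a ≠ 0` only
if there is a walk of length `< n` from `a` to `j`. Expanding `T = 1 + T G` gives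
`T j i = δ j i + ∑ a, T j a * G a i`; the term of any `a ≠ k`, as well as `δ j i`, would yield a
walk from `i` to `j` of length `≤ n` other than `i → k ⇝ j`, which uniqueness of paths forbids.
-/

/-- Number of directed walks of length `k` from `u` to `v`. -/
def walkCount {n : ℕ} (E : Fin n → Fin n → Prop) [DecidableRel E] :
    ℕ → Fin n → Fin n → ℕ
  | 0, u, v => if u = v then 1 else 0
  | k + 1, u, v => ∑ w : Fin n, walkCount E k u w * (if E w v then 1 else 0)

open Polynomial

namespace Matrix

variable {ι : Type*} [Fintype ι] [DecidableEq ι]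

theorem pow_apply_ne_zero_of_support_subset {R : Type*} [Semiring R] {M : Matrix ι ι R}
    {N : Matrix ι ι ℕ} (hMN : ∀ a b, M a b ≠ 0 → N a b ≠ 0) (m : ℕ) {a b : ι}
    (h : (M ^ m) a b ≠ 0) : (N ^ m) a b ≠ 0 := by
  induction m generalizing b with
  | zero =>
    rw [pow_zero] at h ⊢
    obtain rfl : a = b := by_contra fun hab => h (one_apply_ne hab)
    simp
  | succ m ih =>
    rw [pow_succ, mul_apply] at h ⊢
    obtain ⟨c, -, hc⟩ := Finset.exists_ne_zero_of_sum_ne_zero h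
    have hN : (N ^ m) a c * N c b ≠ 0 :=
      mul_ne_zero (ih (left_ne_zero_of_mul hc)) (hMN c b (right_ne_zero_of_mul hc))
    exact fun h0 => hN (Finset.sum_eq_zero_iff.mp h0 c (Finset.mem_univ c))

-- Cayley–Hamilton: `χ(A) = q(A) A + χ(0) = 0` with `χ(0) = ± det A`.
theorem inv_mem_adjoin {K : Type*} [Field K] (A : Matrix ι ι K) : A⁻¹ ∈ Algebra.adjoin K {A} := by
  by_cases hA : IsUnit A.det
  · have hc : A.charpoly.coeff 0 ≠ 0 := by
      rw [det_eq_sign_charpoly_coeff] at hA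
      exact right_ne_zero_of_mul hA.ne_zero
    have hCH : aeval A A.charpoly.divX * A + algebraMap K _ (A.charpoly.coeff 0) = 0 := by
      have := congrArg (aeval A) (divX_mul_X_add A.charpoly)
      rwa [map_add, map_mul, aeval_X, aeval_C, aeval_self_charpoly] at this
    rw [inv_eq_left_inv (B := -(A.charpoly.coeff 0)⁻¹ • aeval A A.charpoly.divX)]
    · exact Subalgebra.smul_mem _ (aeval_mem_adjoin_singleton K A) _
    · rw [add_eq_zero_iff_eq_neg] at hCH
      rw [smul_mul_assoc, hCH, smul_neg, neg_smul, neg_neg, Algebra.algebraMap_eq_smul_one,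
        smul_smul, inv_mul_cancel₀ hc, one_smul]
  · rw [nonsing_inv_apply_not_isUnit A hA]
    exact zero_mem _

theorem exists_pow_apply_ne_zero_of_mem_adjoin {R : Type*} [CommRing R] [Nontrivial R]
    {A M : Matrix ι ι R} (hM : M ∈ Algebra.adjoin R {A}) {a b : ι} (h : M a b ≠ 0) :
    ∃ m < Fintype.card ι, (A ^ m) a b ≠ 0 := by
  rw [Algebra.adjoin_singleton_eq_range_aeval] at hM
  obtain ⟨p, rfl⟩ := hM
  have hχ : A.charpoly.natDegree = Fintype.card ι := charpoly_natDegree_eq_dim A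
  have hdeg : (p %ₘ A.charpoly).natDegree < Fintype.card ι :=
    hχ ▸ natDegree_modByMonic_lt p (charpoly_monic A) fun h1 => by
      rw [h1, natDegree_one] at hχ
      exact (Fintype.card_pos_iff.mpr ⟨a⟩).ne hχ
  rw [AlgHom.toRingHom_eq_coe, RingHom.coe_coe, aeval_eq_aeval_mod_charpoly, aeval_eq_sum_range,
    sum_apply] at h
  obtain ⟨m, hm, hne⟩ := Finset.exists_ne_zero_of_sum_ne_zero h
  rw [smul_apply] at hne
  exact ⟨m, by rw [Finset.mem_range] at hm; omega, right_ne_zero_of_smul hne⟩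

end Matrix

section WalkCount

variable {n : ℕ} (E : Fin n → Fin n → Prop) [DecidableRel E]

def adjMatrix : Matrix (Fin n) (Fin n) ℕ := Matrix.of fun a b => if E a b then 1 else 0

theorem walkCount_eq_adjMatrix_pow (m : ℕ) (u v : Fin n) :
    walkCount E m u v = (adjMatrix E ^ m) u v := by
  induction m generalizing v with
  | zero => simp [walkCount, Matrix.one_apply]
  | succ m ih => simp only [walkCount, ih, pow_succ, Matrix.mul_apply, adjMatrix, Matrix.of_apply]

theorem walkCount_succ_eq_sum (m : ℕ) (u v : Fin n) :
    walkCount E (m + 1) u v = ∑ w, (if E u w then 1 else 0) * walkCount E m w v := by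
  simp only [walkCount_eq_adjMatrix_pow, pow_succ', Matrix.mul_apply, adjMatrix, Matrix.of_apply]

variable {E}

theorem walkCount_succ_ne_zero {m : ℕ} {u w v : Fin n} (huw : E u w)
    (hwv : walkCount E m w v ≠ 0) : walkCount E (m + 1) u v ≠ 0 := by
  rw [walkCount_succ_eq_sum, Ne, Finset.sum_eq_zero_iff]
  exact fun h => hwv (by simpa [huw] using h w (Finset.mem_univ w))

theorem walkCount_ne_zero_of_isChain {u : Fin n} {t : List (Fin n)} (ht : (u :: t).IsChain E) :
    walkCount E t.length u ((u :: t).getLast (List.cons_ne_nil u t)) ≠ 0 := by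
  induction t generalizing u with
  | nil => simp [walkCount]
  | cons w t ih =>
    rw [List.isChain_cons_cons] at ht
    exact walkCount_succ_ne_zero ht.1 (ih ht.2)

theorem walkCount_ne_zero_of_pow_apply_ne_zero {R : Type*} [CommSemiring R]
    {G : Matrix (Fin n) (Fin n) R} (hG : ∀ a b, G a b ≠ 0 → E b a) {m : ℕ} {a b : Fin n}
    (h : (G ^ m) b a ≠ 0) : walkCount E m a b ≠ 0 := by
  rw [walkCount_eq_adjMatrix_pow]
  refine Matrix.pow_apply_ne_zero_of_support_subset (M := G.transpose) (fun c d hcd => ?_) m ?_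
  · simpa [adjMatrix] using hG d c hcd
  · rwa [← Matrix.transpose_pow]

variable (hunique : ∀ u v : Fin n, (∑ k ∈ Finset.range (n + 1), walkCount E k u v) ≤ 1)
include hunique

theorem eq_of_walkCount_ne_zero {p q : ℕ} {u v : Fin n} (hp : p ≤ n) (hq : q ≤ n)
    (hpuv : walkCount E p u v ≠ 0) (hquv : walkCount E q u v ≠ 0) : p = q := by
  by_contra hpq
  have : walkCount E p u v + walkCount E q u v ≤ 1 := by
    rw [← Finset.sum_pair (f := fun c => walkCount E c u v) hpq]
    refine le_trans (Finset.sum_le_sum_of_subset fun c hc => ?_) (hunique u v)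
    rcases Finset.mem_insert.mp hc with rfl | hc
    · exact Finset.mem_range.mpr (by omega)
    · rw [Finset.mem_singleton.mp hc]; exact Finset.mem_range.mpr (by omega)
  omega

theorem eq_of_adj_of_walkCount_ne_zero {p q : ℕ} {u a b v : Fin n} (hp : p + 1 ≤ n)
    (hq : q + 1 ≤ n) (hua : E u a) (hub : E u b) (hav : walkCount E p a v ≠ 0)
    (hbv : walkCount E q b v ≠ 0) : a = b := by
  obtain rfl := Nat.succ_injective <| eq_of_walkCount_ne_zero hunique hp hq
    (walkCount_succ_ne_zero hua hav) (walkCount_succ_ne_zero hub hbv)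
  by_contra hab
  have : walkCount E p a v + walkCount E p b v ≤ 1 := by
    refine le_trans ?_ (le_trans (Finset.single_le_sum (fun _ _ => Nat.zero_le _)
      (Finset.mem_range.mpr (Nat.lt_succ_of_le hp))) (hunique u v))
    rw [walkCount_succ_eq_sum]
    refine le_trans (le_of_eq ?_) (Finset.sum_le_sum_of_subset (Finset.subset_univ {a, b}))
    simp [Finset.sum_pair hab, hua, hub]
  omega

end WalkCount

theorem exists_walkCount_ne_zero_of_inv_apply_ne_zero {n : ℕ} {F : Type*} [Field F]
    {E : Fin n → Fin n → Prop} [DecidableRel E] {G : Matrix (Fin n) (Fin n) F}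
    (hG : ∀ a b, G a b ≠ 0 → E b a) {a b : Fin n} (h : (1 - G)⁻¹ b a ≠ 0) :
    ∃ m < n, walkCount E m a b ≠ 0 := by
  have hmem : (1 - G)⁻¹ ∈ Algebra.adjoin F {G} :=
    Algebra.adjoin_le (Set.singleton_subset_iff.mpr
      (sub_mem (one_mem _) (Algebra.self_mem_adjoin_singleton F G))) (Matrix.inv_mem_adjoin _)
  obtain ⟨m, hm, hGm⟩ := Matrix.exists_pow_apply_ne_zero_of_mem_adjoin hmem h
  exact ⟨m, by simpa using hm, walkCount_ne_zero_of_pow_apply_ne_zero hG hGm⟩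

theorem stmt10_general {n : ℕ} {F : Type*} [Field F]
    (E : Fin n → Fin n → Prop) [DecidableRel E]
    (hunique : ∀ u v : Fin n, (∑ k ∈ Finset.range (n + 1), walkCount E k u v) ≤ 1)
    (i k j : Fin n) (hik : E i k)
    (l : List (Fin n)) (hl : l.Chain' E)
    (hhead : l.head? = some k) (hlast : l.getLast? = some j)
    (hnd : l.Nodup)
    (G : Matrix (Fin n) (Fin n) F)
    (hG : ∀ a b, G a b ≠ 0 → E b a)
    (hinv : IsUnit (1 - G).det) :
    (1 - G)⁻¹ j i = (1 - G)⁻¹ j k * G k i ∧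
    ((1 - G)⁻¹ j k ≠ 0 → G k i = (1 - G)⁻¹ j i / (1 - G)⁻¹ j k) := by
  set T := (1 - G)⁻¹
  obtain ⟨t, rfl⟩ : ∃ t, l = k :: t := by
    cases l with
    | nil => simp at hhead
    | cons u t => exact ⟨t, by simp_all⟩
  have hkj : walkCount E t.length k j ≠ 0 := by
    rw [List.getLast?_eq_some_getLast (List.cons_ne_nil k t), Option.some_inj] at hlast
    exact hlast ▸ walkCount_ne_zero_of_isChain hl
  have hlen : t.length + 1 ≤ n := by simpa using hnd.length_le_card
  have hji : j ≠ i := by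
    rintro rfl
    have := eq_of_walkCount_ne_zero hunique (Nat.zero_le n) hlen (by simp [walkCount])
      (walkCount_succ_ne_zero hik hkj)
    omega
  have hT : T = 1 + T * G := by
    have h := Matrix.nonsing_inv_mul (1 - G) hinv
    rw [mul_sub, mul_one] at h
    rw [← h, sub_add_cancel]
  have hTji : T j i = T j k * G k i := by
    conv_lhs => rw [hT, Matrix.add_apply, Matrix.one_apply_ne hji, zero_add, Matrix.mul_apply]
    refine Finset.sum_eq_single k (fun a _ hak => ?_) (fun h => absurd (Finset.mem_univ k) h)
    by_contra h
    obtain ⟨m, hm, hmaj⟩ :=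
      exists_walkCount_ne_zero_of_inv_apply_ne_zero hG (left_ne_zero_of_mul h)
    exact hak (eq_of_adj_of_walkCount_ne_zero hunique hm hlen (hG a i (right_ne_zero_of_mul h))
      hik hmaj hkj)
  exact ⟨hTji, fun h => by rw [hTji, mul_div_cancel_left₀ _ h]⟩

/-- In a finite acyclic digraph where any two nodes are joined by at most one
directed path, if `(i,k)` is an edge and there is a directed path from `k` to
`j` not containing `i`, then `T_{ji} = T_{jk} · G_{ki}`; in particular, if
`T_{jk} ≠ 0` then `G_{ki} = T_{ji} / T_{jk}`. -/
theorem stmt10 {n : ℕ} {F : Type*} [Field F]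
    (E : Fin n → Fin n → Prop) [DecidableRel E]
    (hacyclic : ∀ v : Fin n, ∀ k, 1 ≤ k → walkCount E k v v = 0)
    (hunique : ∀ u v : Fin n, (∑ k ∈ Finset.range (n + 1), walkCount E k u v) ≤ 1)
    (i k j : Fin n) (hik : E i k)
    (l : List (Fin n)) (hl : l.Chain' E)
    (hhead : l.head? = some k) (hlast : l.getLast? = some j)
    (hil : i ∉ l) (hnd : l.Nodup)
    (G : Matrix (Fin n) (Fin n) F)
    (hG : ∀ a b, G a b ≠ 0 → E b a)
    (hinv : IsUnit (1 - G).det) :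
    (1 - G)⁻¹ j i = (1 - G)⁻¹ j k * G k i ∧
    ((1 - G)⁻¹ j k ≠ 0 → G k i = (1 - G)⁻¹ j i / (1 - G)⁻¹ j k) :=
  stmt10_general E hunique i k j hik l hl hhead hlast hnd G hG hinv
end

section
/- Let Γ be a directed graph, C a set of measured nodes, i a node with out-neighbor set N_i^+, and suppose there exists a node set B with |B| = b < |N_i^+| such that every directed path from a node of N_i^+ to a node of C passes through B. Then for every matrix G consistent with Γ with (I−G) and (I−G_{PP}) invertible (P being the set of nodes not reachable from N_i^+ without passing through B and not in B), the matrix M with rows indexed by C and columns by N_i^+ given by M_{jk} = [(I−G)^{-1}]_{jk} has rank at most b; in particular M does not have full column rank |N_i^+|. -/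
/-!
Write `A = 1 - G` and `X = A⁻¹`. A nonzero entry `G p v` is an edge `v → p`, so for `p ∈ P` the
row `p` of `A` is supported on `P ∪ B`: otherwise `p` would be reachable from `N_i⁺` avoiding `B`.
Reading the rows `P` of `A X = 1` in the columns outside `P` gives `A_PP X_P = -A_PB X_B`, so
there the rows `P` of `X` are combinations of its rows `B`. As `C ⊆ P ∪ B` and `N_i⁺` misses `P`,
every row of `M` lies in the span of the `|B|` rows of `X_{B, N_i⁺}`.
-/

open Submodule Module

namespace Matrix

variable {m n β κ F : Type*} [Field F]

theorem mul_apply_mem_span_range_row [Fintype β] (W : Matrix m β F) (N : Matrix β κ F) (i : m) :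
    (W * N) i ∈ span F (Set.range N.row) := by
  rw [mul_apply_eq_vecMul, ← range_vecMulLinear N]
  exact LinearMap.mem_range_self _ _

theorem rank_le_card_of_row_mem_span [Finite m] [Fintype κ] [Fintype β] {M : Matrix m κ F}
    (N : Matrix β κ F) (h : ∀ j, M j ∈ span F (Set.range N.row)) : M.rank ≤ Fintype.card β :=
  calc M.rank = finrank F (span F (Set.range M.row)) := M.rank_eq_finrank_span_row
    _ ≤ finrank F (span F (Set.range N.row)) :=
      Submodule.finrank_mono (span_le.2 (Set.range_subset_iff.2 h))
    _ ≤ Fintype.card β := finrank_range_le_card N.row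

variable [Fintype n] [DecidableEq n]

theorem submatrix_mul_submatrix_eq_neg {A X : Matrix n n F} (hAX : A * X = 1)
    {P B : Finset n} (hPB : Disjoint P B) (hA : ∀ p ∈ P, ∀ v ∉ P, v ∉ B → A p v = 0)
    (f : κ → n) (hf : ∀ k, f k ∉ P) :
    A.submatrix (Subtype.val : P → n) (Subtype.val : P → n) * X.submatrix (Subtype.val : P → n) f =
      -(A.submatrix (Subtype.val : P → n) (Subtype.val : B → n) *
        X.submatrix (Subtype.val : B → n) f) := by
  ext p k
  have hzero : ∑ v, A p v * X v (f k) = 0 := by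
    rw [← mul_apply, hAX, one_apply_ne]
    exact fun h => hf k (h ▸ p.2)
  rw [← Finset.sum_subset (Finset.subset_univ (P ∪ B)) fun v _ hv => by
      rw [Finset.mem_union, not_or] at hv; rw [hA p p.2 v hv.1 hv.2, zero_mul],
    Finset.sum_union hPB, ← Finset.sum_coe_sort P, ← Finset.sum_coe_sort B] at hzero
  simpa [mul_apply, eq_neg_iff_add_eq_zero] using hzero

theorem rank_submatrix_inv_le_card {A : Matrix n n F} (hA : IsUnit A.det) {P B C : Finset n}
    (hPB : Disjoint P B) (hAPB : ∀ p ∈ P, ∀ v ∉ P, v ∉ B → A p v = 0)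
    (hPP : IsUnit (A.submatrix (Subtype.val : P → n) (Subtype.val : P → n)).det)
    (hC : C ⊆ P ∪ B) [Fintype κ] (f : κ → n) (hf : ∀ k, f k ∉ P) :
    (A⁻¹.submatrix (Subtype.val : C → n) f).rank ≤ B.card := by
  have hblock : A⁻¹.submatrix (Subtype.val : P → n) f =
      -((A.submatrix (Subtype.val : P → n) (Subtype.val : P → n))⁻¹ *
        A.submatrix (Subtype.val : P → n) (Subtype.val : B → n)) *
        A⁻¹.submatrix (Subtype.val : B → n) f := by
    rw [Matrix.neg_mul, Matrix.mul_assoc, ← Matrix.mul_neg,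
      ← submatrix_mul_submatrix_eq_neg (A.mul_nonsing_inv hA) hPB hAPB f hf,
      nonsing_inv_mul_cancel_left _ _ hPP]
  rw [← Fintype.card_coe B]
  refine rank_le_card_of_row_mem_span (A⁻¹.submatrix (Subtype.val : B → n) f) fun j => ?_
  rcases Finset.mem_union.1 (hC j.2) with hjP | hjB
  · exact congrFun hblock ⟨j, hjP⟩ ▸ mul_apply_mem_span_range_row _ _ _
  · exact subset_span ⟨⟨j, hjB⟩, rfl⟩

end Matrix

def ReachableAvoiding {α : Type*} (E : α → α → Prop) (S B : Set α) (v : α) : Prop :=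
  ∃ l : List α, l ≠ [] ∧ l.IsChain E ∧ (∃ k ∈ S, l.head? = some k) ∧ l.getLast? = some v ∧
    ∀ u ∈ l, u ∉ B

namespace ReachableAvoiding

variable {α : Type*} {E : α → α → Prop} {S B : Set α}

theorem of_mem {k : α} (hkS : k ∈ S) (hkB : k ∉ B) : ReachableAvoiding E S B k :=
  ⟨[k], List.cons_ne_nil k [], List.isChain_singleton k, ⟨k, hkS, rfl⟩, rfl, by simpa⟩

theorem tail {a b : α} (hb : ReachableAvoiding E S B b) (hE : E b a) (haB : a ∉ B) :
    ReachableAvoiding E S B a := by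
  obtain ⟨l, hne, hchain, ⟨k, hkS, hhead⟩, hlast, havoid⟩ := hb
  refine ⟨l ++ [a], by simp, hchain.append (List.isChain_singleton a) ?_,
    ⟨k, hkS, by rwa [List.head?_append_of_ne_nil _ hne]⟩, by simp, ?_⟩
  · simp_all
  · simpa [or_imp, forall_and, haB] using havoid

theorem not_of_separates {C : Set α}
    (hsep : ∀ l : List α, l ≠ [] → l.IsChain E → (∃ k ∈ S, l.head? = some k) →
      (∃ j ∈ C, l.getLast? = some j) → ∃ v ∈ l, v ∈ B)
    {j : α} (hj : j ∈ C) : ¬ ReachableAvoiding E S B j := by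
  rintro ⟨l, hne, hchain, hhead, hlast, havoid⟩
  obtain ⟨v, hvl, hvB⟩ := hsep l hne hchain hhead ⟨j, hj, hlast⟩
  exact havoid v hvl hvB

end ReachableAvoiding

theorem stmt14_general {L : ℕ} {F : Type*} [Field F]
    (E : Fin L → Fin L → Prop)
    (Nplus C B P : Finset (Fin L))
    (hb : B.card < Nplus.card)
    (hblock : ∀ l : List (Fin L), l ≠ [] → l.Chain' E →
      (∃ k ∈ Nplus, l.head? = some k) → (∃ j ∈ C, l.getLast? = some j) →
      ∃ v ∈ l, v ∈ B)
    (hP : ∀ v, v ∈ P ↔ v ∉ B ∧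
      ¬ ∃ l : List (Fin L), l ≠ [] ∧ l.Chain' E ∧
        (∃ k ∈ Nplus, l.head? = some k) ∧ l.getLast? = some v ∧ ∀ u ∈ l, u ∉ B)
    (G : Matrix (Fin L) (Fin L) F)
    (hG : ∀ a b, G a b ≠ 0 → E b a)
    (hinv : IsUnit (1 - G).det)
    (hinvPP : IsUnit (1 - Matrix.of (fun a b : ↥P => G a b)).det) :
    (Matrix.of (fun (j : ↥C) (k : ↥Nplus) => (1 - G)⁻¹ j k)).rank ≤ B.card ∧
    (Matrix.of (fun (j : ↥C) (k : ↥Nplus) => (1 - G)⁻¹ j k)).rank < Nplus.card := by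
  have hP' : ∀ v, v ∈ P ↔ v ∉ B ∧ ¬ ReachableAvoiding E Nplus B v := hP
  have hPB : Disjoint P B := Finset.disjoint_left.2 fun v hv => ((hP' v).1 hv).1
  have hrowP : ∀ p ∈ P, ∀ v ∉ P, v ∉ B → (1 - G) p v = 0 := by
    intro p hp v hvP hvB
    have hv : ReachableAvoiding E Nplus B v := by_contra fun h => hvP ((hP' v).2 ⟨hvB, h⟩)
    have hGpv : G p v = 0 :=
      by_contra fun h => ((hP' p).1 hp).2 (hv.tail (hG p v h) ((hP' p).1 hp).1)
    simp [Matrix.one_apply_ne (ne_of_mem_of_not_mem hp hvP), hGpv]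
  have hC : C ⊆ P ∪ B := fun j hj => by
    by_cases hjB : j ∈ B
    · exact Finset.mem_union_right _ hjB
    · exact Finset.mem_union_left _
        ((hP' j).2 ⟨hjB, ReachableAvoiding.not_of_separates hblock hj⟩)
  have hNP : ∀ k : Nplus, (k : Fin L) ∉ P := fun k hkP =>
    ((hP' k).1 hkP).2 (.of_mem k.2 ((hP' k).1 hkP).1)
  have hPP : (1 - G).submatrix (Subtype.val : P → Fin L) Subtype.val =
      1 - Matrix.of (fun a b : ↥P => G a b) := by
    rw [← Matrix.submatrix_one_embedding (Function.Embedding.subtype _)]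
    rfl
  have hrank := Matrix.rank_submatrix_inv_le_card hinv hPB hrowP (hPP ▸ hinvPP) hC Subtype.val hNP
  exact ⟨hrank, hrank.trans_lt hb⟩

/-- If every directed path from an out-neighbor of `i` to a measured node in
`C` passes through a set `B` with `|B| < |N_i⁺|`, then for every `G` consistent
with the graph (with `I-G` and `I-G_{PP}` invertible, `P` the set of nodes
neither in `B` nor reachable from `N_i⁺` avoiding `B`), the matrix
`M_{jk} = [(I-G)⁻¹]_{jk}` (rows in `C`, columns in `N_i⁺`) has rank at most
`|B|` — in particular not full column rank. -/
theorem stmt14 {L : ℕ} {F : Type*} [Field F]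
    (E : Fin L → Fin L → Prop) (i : Fin L)
    (Nplus C B P : Finset (Fin L))
    (hN : ∀ k, k ∈ Nplus ↔ E i k)
    (hb : B.card < Nplus.card)
    (hblock : ∀ l : List (Fin L), l ≠ [] → l.Chain' E →
      (∃ k ∈ Nplus, l.head? = some k) → (∃ j ∈ C, l.getLast? = some j) →
      ∃ v ∈ l, v ∈ B)
    (hP : ∀ v, v ∈ P ↔ v ∉ B ∧
      ¬ ∃ l : List (Fin L), l ≠ [] ∧ l.Chain' E ∧
        (∃ k ∈ Nplus, l.head? = some k) ∧ l.getLast? = some v ∧ ∀ u ∈ l, u ∉ B)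
    (G : Matrix (Fin L) (Fin L) F)
    (hG : ∀ a b, G a b ≠ 0 → E b a)
    (hinv : IsUnit (1 - G).det)
    (hinvPP : IsUnit (1 - Matrix.of (fun a b : ↥P => G a b)).det) :
    (Matrix.of (fun (j : ↥C) (k : ↥Nplus) => (1 - G)⁻¹ j k)).rank ≤ B.card ∧
    (Matrix.of (fun (j : ↥C) (k : ↥Nplus) => (1 - G)⁻¹ j k)).rank < Nplus.card :=
  stmt14_general E Nplus C B P hb hblock hP G hG hinv hinvPP
end

section
/- Let Γ be a directed graph in which the out-neighbors k_1,...,k_d of node i admit d pairwise vertex-disjoint directed paths to d distinct measured nodes j_1,...,j_d. Then there exists a choice of matrix Ḡ consistent with Γ (namely the 0/1 indicator of the edges on those paths) such that (I−Ḡ) is invertible and the d×d matrix with (a,b) entry [(I−Ḡ)^{-1}]_{j_a k_b} is a permutation matrix, hence invertible. -/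
/-!
Let `Ḡ` have `(x, y)` entry `1` exactly on the path edges `y → x`. Every vertex has at most one
predecessor along the paths and the paths carry no cycle, so `(I - Ḡ)⁻¹ = I + Ḡ + Ḡ² + ⋯` is the
0/1 reachability matrix: its `(x, y)` entry is `1` iff `x` lies on the same path as `y`, at or
after it. As the paths are vertex-disjoint, `j a` is reachable from `k b` only when `a = b`, so
the `d × d` block is the identity.
-/

open Relation

section RelMatrix

variable {α R : Type*} [Fintype α] [Ring R] {r : α → α → Prop}

open Classical in
/-- The `(x, y)` entry is `1` exactly when `r y x`, so that an edge `y → x` of a graph sits in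
row `x` and column `y`. -/
noncomputable def relMatrix (R : Type*) [Zero R] [One R] (r : α → α → Prop) : Matrix α α R :=
  Matrix.of fun x y => if r y x then 1 else 0

theorem sum_relMatrix_mul_relMatrix_reflTransGen (hpred : ∀ x y z, r y x → r z x → y = z)
    (x y : α) :
    ∑ z, relMatrix R r x z * relMatrix R (ReflTransGen r) z y =
      relMatrix R (TransGen r) x y := by
  classical
  simp only [relMatrix, Matrix.of_apply, ite_zero_mul_ite_zero, mul_one]
  by_cases hx : ∃ z, r z x
  · obtain ⟨z₀, hz₀⟩ := hx
    have hiff : TransGen r y x ↔ ReflTransGen r y z₀ :=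
      TransGen.tail'_iff.trans
        ⟨fun ⟨z, hyz, hzx⟩ => hpred x z₀ z hz₀ hzx ▸ hyz, fun h => ⟨z₀, h, hz₀⟩⟩
    rw [Finset.sum_eq_single z₀ (fun z _ hz => if_neg fun h => hz (hpred x z z₀ h.1 hz₀))
      (fun h => absurd (Finset.mem_univ z₀) h), if_congr (and_iff_right hz₀) rfl rfl,
      if_congr hiff rfl rfl]
  · push Not at hx
    rw [Finset.sum_eq_zero fun z _ => if_neg fun h => hx z h.1, if_neg]
    exact fun h => absurd (TransGen.tail'_iff.mp h) fun ⟨z, _, hz⟩ => hx z hz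

theorem one_sub_relMatrix_mul_relMatrix_reflTransGen [DecidableEq α]
    (hpred : ∀ x y z, r y x → r z x → y = z)
    (hacyc : ∀ x, ¬ TransGen r x x) :
    (1 - relMatrix R r) * relMatrix R (ReflTransGen r) = 1 := by
  classical
  ext x y
  rw [sub_mul, one_mul, Matrix.sub_apply, Matrix.mul_apply,
    sum_relMatrix_mul_relMatrix_reflTransGen hpred, Matrix.one_apply]
  simp only [relMatrix, Matrix.of_apply]
  by_cases hxy : x = y
  · subst hxy
    rw [if_pos ReflTransGen.refl, if_neg (hacyc x), if_pos rfl, sub_zero]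
  · have hrefl : ReflTransGen r y x ↔ TransGen r y x :=
      reflTransGen_iff_eq_or_transGen.trans (or_iff_right hxy)
    rw [if_congr hrefl rfl rfl, sub_self, if_neg hxy]

end RelMatrix

theorem List.Nodup.idxOf_of_eq_append_cons {α : Type*} [DecidableEq α] {l l1 l2 : List α} {x : α}
    (hl : l.Nodup) (h : l = l1 ++ x :: l2) : l.idxOf x = l1.length := by
  subst h
  rw [List.idxOf_append_of_notMem, List.idxOf_cons_self, add_zero]
  exact fun hx => (List.nodup_append.mp hl).2.2 x hx x List.mem_cons_self rfl

section Paths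

variable {ι α : Type*} {p : ι → List α}

variable (p) in
def PathEdge (y x : α) : Prop :=
  ∃ a l1 l2, p a = l1 ++ y :: x :: l2

theorem isChain_pathEdge (a : ι) : (p a).IsChain (PathEdge p) :=
  (List.isChain_isInfix (p a)).imp fun _ _ ⟨s, t, h⟩ => ⟨a, s, t, by simp [← h]⟩

theorem PathEdge.of_isChain {E : α → α → Prop} (hchain : ∀ a, (p a).IsChain E) {x y : α}
    (h : PathEdge p y x) : E y x := by
  obtain ⟨a, l1, l2, h⟩ := h
  exact List.isChain_pair.mp ((hchain a).infix ⟨l1, l2, by simp [h]⟩)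

theorem reflTransGen_pathEdge_of_head?_of_getLast? {a : ι} {u v : α}
    (hu : (p a).head? = some u) (hv : (p a).getLast? = some v) : ReflTransGen (PathEdge p) u v := by
  obtain ⟨l, hl⟩ := List.head?_eq_some_iff.mp hu
  refine List.relationReflTransGen_of_exists_isChain_cons l (hl ▸ isChain_pathEdge a) ?_
  rw [hl, List.getLast?_eq_some_getLast (List.cons_ne_nil u l)] at hv
  exact Option.some_injective _ hv

variable [DecidableEq α] (hnodup : ∀ a, (p a).Nodup)
include hnodup

theorem PathEdge.exists_idxOf {x y : α} (h : PathEdge p y x) :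
    ∃ a, y ∈ p a ∧ x ∈ p a ∧ (p a).idxOf x = (p a).idxOf y + 1 := by
  obtain ⟨a, l1, l2, h⟩ := h
  refine ⟨a, by simp [h], by simp [h], ?_⟩
  rw [(hnodup a).idxOf_of_eq_append_cons h,
    (hnodup a).idxOf_of_eq_append_cons (l1 := l1 ++ [y]) (l2 := l2) (by simp [h]),
    List.length_append, List.length_singleton]

variable (hdisj : ∀ a b v, v ∈ p a → v ∈ p b → a = b)
include hdisj

theorem PathEdge.unique_left {x y z : α} (hy : PathEdge p y x) (hz : PathEdge p z x) : y = z := by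
  obtain ⟨a, hya, hxa, ha⟩ := hy.exists_idxOf hnodup
  obtain ⟨b, hzb, hxb, hb⟩ := hz.exists_idxOf hnodup
  obtain rfl := hdisj a b x hxa hxb
  exact (List.idxOf_inj hya).mp (by omega)

theorem exists_idxOf_lt_of_transGen_pathEdge {x y : α} (h : TransGen (PathEdge p) y x) :
    ∃ a, y ∈ p a ∧ x ∈ p a ∧ (p a).idxOf y < (p a).idxOf x := by
  induction h with
  | single h =>
    obtain ⟨a, hy, hx, h⟩ := h.exists_idxOf hnodup
    exact ⟨a, hy, hx, by omega⟩
  | tail _ h ih =>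
    obtain ⟨a, hy, hz, ha⟩ := ih
    obtain ⟨b, hzb, hx, hb⟩ := h.exists_idxOf hnodup
    obtain rfl := hdisj a b _ hz hzb
    exact ⟨a, hy, hx, by omega⟩

theorem not_transGen_pathEdge_self (x : α) : ¬ TransGen (PathEdge p) x x := fun h =>
  have ⟨_, _, _, h⟩ := exists_idxOf_lt_of_transGen_pathEdge hnodup hdisj h
  h.false

theorem eq_of_reflTransGen_pathEdge {a b : ι} {u v : α} (h : ReflTransGen (PathEdge p) u v)
    (hu : u ∈ p a) (hv : v ∈ p b) : a = b := by
  rcases reflTransGen_iff_eq_or_transGen.mp h with rfl | h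
  · exact hdisj a b _ hu hv
  · obtain ⟨c, huc, hvc, -⟩ := exists_idxOf_lt_of_transGen_pathEdge hnodup hdisj h
    exact (hdisj a c u hu huc).trans (hdisj b c v hv hvc).symm

end Paths

theorem stmt15_general {n d : ℕ} {F : Type*} [Field F]
    (E : Fin n → Fin n → Prop)
    (k j : Fin d → Fin n)
    (p : Fin d → List (Fin n))
    (hchain : ∀ a, (p a).Chain' E)
    (hhead : ∀ a, (p a).head? = some (k a))
    (hlast : ∀ a, (p a).getLast? = some (j a))
    (hnodup : ∀ a, (p a).Nodup)
    (hdisj : ∀ a b, a ≠ b → ∀ v, v ∈ p a → v ∉ p b) :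
    ∃ Gbar : Matrix (Fin n) (Fin n) F,
      (∀ x y, ((∃ a l1 l2, p a = l1 ++ y :: x :: l2) → Gbar x y = 1) ∧
              (¬ (∃ a l1 l2, p a = l1 ++ y :: x :: l2) → Gbar x y = 0)) ∧
      (∀ x y, Gbar x y ≠ 0 → E y x) ∧
      IsUnit (1 - Gbar).det ∧
      ∃ σ : Equiv.Perm (Fin d),
        (∀ a b, (1 - Gbar)⁻¹ (j a) (k b) = if σ a = b then 1 else 0) ∧
        IsUnit (Matrix.of fun a b : Fin d => (1 - Gbar)⁻¹ (j a) (k b)).det := by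
  classical
  have hsame : ∀ a b v, v ∈ p a → v ∈ p b → a = b := fun a b v ha hb =>
    by_contra fun h => hdisj a b h v ha hb
  have hright : (1 - relMatrix F (PathEdge p)) * relMatrix F (ReflTransGen (PathEdge p)) = 1 :=
    one_sub_relMatrix_mul_relMatrix_reflTransGen
      (fun _ _ _ => PathEdge.unique_left hnodup hsame) (not_transGen_pathEdge_self hnodup hsame)
  have hjk : ∀ a b, (1 - relMatrix F (PathEdge p))⁻¹ (j a) (k b) = if a = b then 1 else 0 := by
    intro a b
    rw [Matrix.inv_eq_right_inv hright, relMatrix, Matrix.of_apply]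
    refine if_congr ⟨fun h => ?_, ?_⟩ rfl rfl
    · exact (eq_of_reflTransGen_pathEdge hnodup hsame h (List.mem_of_mem_head? (hhead b))
        (List.mem_of_mem_getLast? (hlast a))).symm
    · rintro rfl
      exact reflTransGen_pathEdge_of_head?_of_getLast? (hhead a) (hlast a)
  refine ⟨relMatrix F (PathEdge p), fun x y => ⟨fun h => if_pos h, fun h => if_neg h⟩,
    fun x y h => ?_, Matrix.isUnit_det_of_right_inverse hright, Equiv.refl _, hjk, ?_⟩
  · exact PathEdge.of_isChain hchain (of_not_not fun h' => h (if_neg h'))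
  · have hblock :
        (Matrix.of fun a b : Fin d => (1 - relMatrix F (PathEdge p))⁻¹ (j a) (k b)) = 1 := by
      ext a b
      rw [Matrix.of_apply, hjk, Matrix.one_apply]
    rw [hblock, Matrix.det_one]
    exact isUnit_one

/-- If the out-neighbors `k 1, …, k d` of node `i` admit pairwise vertex-disjoint
directed paths to distinct measured nodes `j 1, …, j d`, then the 0/1 indicator
matrix `Ḡ` of the edges of these paths is consistent with the graph, `I - Ḡ` is
invertible, and the `d × d` matrix `[(I-Ḡ)⁻¹]_{j_a k_b}` is a permutation
matrix, hence invertible. -/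
theorem stmt15 {n d : ℕ} {F : Type*} [Field F]
    (E : Fin n → Fin n → Prop) (i : Fin n)
    (k j : Fin d → Fin n)
    (hk : ∀ a, E i (k a))
    (p : Fin d → List (Fin n))
    (hne : ∀ a, p a ≠ [])
    (hchain : ∀ a, (p a).Chain' E)
    (hhead : ∀ a, (p a).head? = some (k a))
    (hlast : ∀ a, (p a).getLast? = some (j a))
    (hnodup : ∀ a, (p a).Nodup)
    (hdisj : ∀ a b, a ≠ b → ∀ v, v ∈ p a → v ∉ p b) :
    ∃ Gbar : Matrix (Fin n) (Fin n) F,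
      (∀ x y, ((∃ a l1 l2, p a = l1 ++ y :: x :: l2) → Gbar x y = 1) ∧
              (¬ (∃ a l1 l2, p a = l1 ++ y :: x :: l2) → Gbar x y = 0)) ∧
      (∀ x y, Gbar x y ≠ 0 → E y x) ∧
      IsUnit (1 - Gbar).det ∧
      ∃ σ : Equiv.Perm (Fin d),
        (∀ a b, (1 - Gbar)⁻¹ (j a) (k b) = if σ a = b then 1 else 0) ∧
        IsUnit (Matrix.of fun a b : Fin d => (1 - Gbar)⁻¹ (j a) (k b)).det :=
  stmt15_general E k j p hchain hhead hlast hnodup hdisj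
end

section
/- Network identifiability reformulation: let G⁰ be an L×L matrix consistent with a directed graph Γ, with I−G⁰ invertible, and C a selection (0/1 row-selection) matrix. Then the following are equivalent: (a) every matrix G consistent with Γ with I−G invertible and C(I−G)^{-1} = C(I−G⁰)^{-1} satisfies G = G⁰; (b) for every matrix Δ consistent with Γ such that I−G⁰−Δ is invertible, C(I−G⁰)^{-1}Δ = 0 implies Δ = 0. -/
/-- Resolvent identity: `A⁻¹ (A - B) B⁻¹ = B⁻¹ - A⁻¹` for invertible `A`, `B`. -/
lemma inv_sub_inv_aux {n : ℕ} {F : Type*} [Field F]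
    (A B : Matrix (Fin n) (Fin n) F) (hA : IsUnit A.det) (hB : IsUnit B.det) :
    A⁻¹ * (A - B) * B⁻¹ = B⁻¹ - A⁻¹ := by
  rw [Matrix.mul_sub, Matrix.nonsing_inv_mul A hA, Matrix.sub_mul, Matrix.one_mul,
    Matrix.mul_assoc, Matrix.mul_nonsing_inv B hB, Matrix.mul_one]

/-- Network identifiability reformulation: with `G⁰` consistent with the graph,
`I - G⁰` invertible and `C` a row-selection matrix, identifiability of `G⁰`
from `C(I-G)⁻¹` among matrices consistent with the graph is equivalent to the
condition that `C(I-G⁰)⁻¹ Δ = 0 ⟹ Δ = 0` for every `Δ` consistent with the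
graph with `I - G⁰ - Δ` invertible. -/
theorem stmt17 {L p : ℕ} {F : Type*} [Field F]
    (E : Fin L → Fin L → Prop)
    (G0 : Matrix (Fin L) (Fin L) F)
    (hG0 : ∀ a b, G0 a b ≠ 0 → E b a)
    (hinv0 : IsUnit (1 - G0).det)
    (C : Matrix (Fin p) (Fin L) F)
    (hC : ∀ a, ∃ l, ∀ b, C a b = if b = l then 1 else 0) :
    (∀ G : Matrix (Fin L) (Fin L) F, (∀ a b, G a b ≠ 0 → E b a) →
        IsUnit (1 - G).det → C * (1 - G)⁻¹ = C * (1 - G0)⁻¹ → G = G0) ↔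
    (∀ Δ : Matrix (Fin L) (Fin L) F, (∀ a b, Δ a b ≠ 0 → E b a) →
        IsUnit (1 - G0 - Δ).det → C * (1 - G0)⁻¹ * Δ = 0 → Δ = 0) := by
  constructor
  · intro H Δ hΔ hinv hzero
    set G := G0 + Δ with hG
    have hGB : (1 : Matrix (Fin L) (Fin L) F) - G = 1 - G0 - Δ := by
      rw [hG]; abel
    have hEG : ∀ a b, G a b ≠ 0 → E b a := by
      intro a b hne
      by_contra hE
      have h1 : G0 a b = 0 := by by_contra h; exact hE (hG0 a b h)
      have h2 : Δ a b = 0 := by by_contra h; exact hE (hΔ a b h)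
      exact hne (by simp [hG, Matrix.add_apply, h1, h2])
    have hinvG : IsUnit (1 - G).det := by rw [hGB]; exact hinv
    have hAB : (1 - G0) - (1 - G) = Δ := by rw [hG]; abel
    have key : (1 - G0)⁻¹ * Δ * (1 - G)⁻¹ = (1 - G)⁻¹ - (1 - G0)⁻¹ := by
      rw [← hAB]; exact inv_sub_inv_aux _ _ hinv0 hinvG
    have hCeq : C * (1 - G)⁻¹ = C * (1 - G0)⁻¹ := by
      have h0 : C * ((1 - G)⁻¹ - (1 - G0)⁻¹) = 0 := by
        rw [← key, ← Matrix.mul_assoc, ← Matrix.mul_assoc, hzero, Matrix.zero_mul]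
      rw [Matrix.mul_sub] at h0
      exact sub_eq_zero.mp h0
    have hGG0 : G = G0 := H G hEG hinvG hCeq
    have : Δ = G - G0 := by rw [hG]; abel
    rw [this, hGG0, sub_self]
  · intro H G hEG hinvG hCeq
    set Δ := G - G0 with hΔdef
    have hGB : (1 : Matrix (Fin L) (Fin L) F) - G0 - Δ = 1 - G := by
      rw [hΔdef]; abel
    have hEΔ : ∀ a b, Δ a b ≠ 0 → E b a := by
      intro a b hne
      by_contra hE
      have h1 : G0 a b = 0 := by by_contra h; exact hE (hG0 a b h)
      have h2 : G a b = 0 := by by_contra h; exact hE (hEG a b h)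
      exact hne (by simp [hΔdef, Matrix.sub_apply, h1, h2])
    have hAB : (1 - G0) - (1 - G) = Δ := by rw [hΔdef]; abel
    have key : (1 - G0)⁻¹ * Δ * (1 - G)⁻¹ = (1 - G)⁻¹ - (1 - G0)⁻¹ := by
      rw [← hAB]; exact inv_sub_inv_aux _ _ hinv0 hinvG
    have hz : C * (1 - G0)⁻¹ * Δ = 0 := by
      have h1 : C * ((1 - G0)⁻¹ * Δ * (1 - G)⁻¹) = 0 := by
        rw [key, Matrix.mul_sub, hCeq, sub_self]
      have h2 := congrArg (· * (1 - G)) h1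
      simpa [Matrix.mul_assoc, Matrix.nonsing_inv_mul _ hinvG] using h2
    have hΔ0 : Δ = 0 := H Δ hEΔ (by rw [hGB]; exact hinvG) hz
    rw [hΔdef] at hΔ0
    exact sub_eq_zero.mp hΔ0
end
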